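/- arXiv:1709.08944 — 3 statements merged into one kernel-verified Lean document; each statement's English description precedes it below -/
import Mathlib

section
/- For every r with 1/5 < r < 1 there exist functions h(z) = Σ_{k=0}^∞ a_k z^k and g(z) = Σ_{k=1}^∞ b_k z^k analytic on the unit disk 𝔻 with |h(z)| ≤ 1 and |g'(z)| ≤ |h'(z)| for all z ∈ 𝔻, and a point z with |z| ≤ r, such that |a_0| + Σ_{k=1}^∞ (|a_k| + |b_k|) r^k + |h(z) − a_0|² > 1. (In particular, the radius 1/5 in the preceding inequality is best possible.) -/
/-!
The extremal functions are the disk automorphism `h(z) = (s + z) / (1 + s z)` with `0 ≤ s < 1`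
and `g = h - s`, whose Taylor coefficients for `k ≥ 1` coincide: `(1 - s²)(-s)^(k-1)`. Their
Bohr sum is the geometric series `s + 2 (1 - s²) r / (1 - s r)`, which exceeds `1` exactly when
`(1 - s)(r (2 + 3 s) - 1) > 0`; for `r > 1/5` some `s < 1` achieves this.
-/

open Metric ComplexConjugate

noncomputable def mobius (a z : ℂ) : ℂ := (a + z) / (1 + conj a * z)

noncomputable def mobiusCoeff (a : ℂ) : ℕ → ℂ
  | 0 => a
  | k + 1 => ((1 - ‖a‖ ^ 2 : ℝ) : ℂ) * (-conj a) ^ k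

section Mobius

variable {a z : ℂ}

theorem normSq_one_add_conj_mul_sub_normSq_add (a z : ℂ) :
    Complex.normSq (1 + conj a * z) - Complex.normSq (a + z) =
      (1 - Complex.normSq a) * (1 - Complex.normSq z) := by
  simp only [Complex.normSq_apply, Complex.add_re, Complex.add_im, Complex.mul_re,
    Complex.mul_im, Complex.conj_re, Complex.conj_im, Complex.one_re, Complex.one_im]
  ring

theorem norm_mobius_le_one (ha : ‖a‖ ≤ 1) (hz : ‖z‖ ≤ 1) : ‖mobius a z‖ ≤ 1 := by
  have hsq : Complex.normSq (a + z) ≤ Complex.normSq (1 + conj a * z) := by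
    have := normSq_one_add_conj_mul_sub_normSq_add a z
    rw [Complex.normSq_eq_norm_sq a, Complex.normSq_eq_norm_sq z] at this
    nlinarith [mul_nonneg (sub_nonneg.2 (pow_le_one₀ (n := 2) (norm_nonneg a) ha))
      (sub_nonneg.2 (pow_le_one₀ (n := 2) (norm_nonneg z) hz))]
  rw [mobius, norm_div]
  refine div_le_one_of_le₀ ?_ (norm_nonneg _)
  rw [Complex.norm_def, Complex.norm_def]
  exact Real.sqrt_le_sqrt hsq

theorem norm_conj_mul_lt_one (ha : ‖a‖ ≤ 1) (hz : ‖z‖ < 1) : ‖conj a * z‖ < 1 := by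
  rw [norm_mul, Complex.norm_conj]
  nlinarith [norm_nonneg a, norm_nonneg z]

theorem one_add_conj_mul_ne_zero (ha : ‖a‖ ≤ 1) (hz : ‖z‖ < 1) : 1 + conj a * z ≠ 0 := by
  intro h0
  have : ‖conj a * z‖ = 1 := by rw [eq_neg_of_add_eq_zero_right h0, norm_neg, norm_one]
  exact (norm_conj_mul_lt_one ha hz).ne this

theorem differentiableOn_mobius (ha : ‖a‖ ≤ 1) : DifferentiableOn ℂ (mobius a) (ball 0 1) :=
  DifferentiableOn.div (by fun_prop) (by fun_prop) fun _ hz =>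
    one_add_conj_mul_ne_zero ha (mem_ball_zero_iff.1 hz)

theorem hasSum_mobiusCoeff (ha : ‖a‖ ≤ 1) (hz : ‖z‖ < 1) :
    HasSum (fun k => mobiusCoeff a k * z ^ k) (mobius a z) := by
  have hq : ‖-(conj a * z)‖ < 1 := by rw [norm_neg]; exact norm_conj_mul_lt_one ha hz
  have htail : HasSum (fun k => mobiusCoeff a (k + 1) * z ^ (k + 1))
      (((1 - ‖a‖ ^ 2 : ℝ) : ℂ) * z * (1 - -(conj a * z))⁻¹) := by
    have hterm (k : ℕ) : mobiusCoeff a (k + 1) * z ^ (k + 1) =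
        ((1 - ‖a‖ ^ 2 : ℝ) : ℂ) * z * (-(conj a * z)) ^ k := by
      rw [mobiusCoeff.eq_2]
      ring
    simp_rw [hterm]
    exact (hasSum_geometric_of_norm_lt_one hq).mul_left (((1 - ‖a‖ ^ 2 : ℝ) : ℂ) * z)
  have hne := one_add_conj_mul_ne_zero ha hz
  have hsplit : mobius a z - ∑ k ∈ Finset.range 1, mobiusCoeff a k * z ^ k =
      ((1 - ‖a‖ ^ 2 : ℝ) : ℂ) * z * (1 - -(conj a * z))⁻¹ := by
    rw [Finset.sum_range_one, mobiusCoeff.eq_1, pow_zero, mul_one, sub_neg_eq_add, mobius]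
    push_cast
    rw [← Complex.conj_mul', eq_mul_inv_iff_mul_eq₀ hne, sub_mul, div_mul_cancel₀ _ hne]
    ring
  rw [← hasSum_nat_add_iff' 1, hsplit]
  exact htail

theorem norm_mobiusCoeff_succ (ha : ‖a‖ ≤ 1) (k : ℕ) :
    ‖mobiusCoeff a (k + 1)‖ = (1 - ‖a‖ ^ 2) * ‖a‖ ^ k := by
  rw [mobiusCoeff.eq_2, norm_mul, Complex.norm_real, Real.norm_of_nonneg
    (sub_nonneg.2 (pow_le_one₀ (norm_nonneg a) ha)), norm_pow, norm_neg, Complex.norm_conj]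

theorem tsum_norm_mobiusCoeff_mul_pow (ha : ‖a‖ ≤ 1) {r : ℝ} (hr : 0 ≤ r) (har : ‖a‖ * r < 1) :
    ∑' k, ‖mobiusCoeff a (k + 1)‖ * r ^ (k + 1) = (1 - ‖a‖ ^ 2) * r / (1 - ‖a‖ * r) := by
  have hterm (k : ℕ) : ‖mobiusCoeff a (k + 1)‖ * r ^ (k + 1) =
      (1 - ‖a‖ ^ 2) * r * (‖a‖ * r) ^ k := by
    rw [norm_mobiusCoeff_succ ha, mul_pow]
    ring
  simp_rw [hterm, tsum_mul_left, tsum_geometric_of_lt_one (by positivity) har, div_eq_mul_inv]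

end Mobius

theorem hasSum_update_zero {R : Type*} [Ring R] [TopologicalSpace R] [IsTopologicalAddGroup R]
    {f : ℕ → R} {z s : R} (hf : HasSum (fun k => f k * z ^ k) s) :
    HasSum (fun k => Function.update f 0 0 k * z ^ k) (s - f 0) := by
  have hupd : (fun k => Function.update f 0 0 k * z ^ k) =
      Function.update (fun k => f k * z ^ k) 0 0 := by
    ext (_ | k) <;> simp
  rw [hupd]
  have := hf.update 0 0
  rwa [pow_zero, mul_one, zero_sub, neg_add_eq_sub] at this

theorem one_lt_add_two_mul_div {s r : ℝ} (hs : s < 1) (hsr : s * r < 1)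
    (hr : 1 < r * (2 + 3 * s)) : 1 < s + 2 * ((1 - s ^ 2) * r / (1 - s * r)) := by
  have hd : 0 < 1 - s * r := by linarith
  rw [← sub_lt_iff_lt_add', ← mul_div_assoc, lt_div_iff₀ hd]
  nlinarith [mul_pos (sub_pos.2 hs) (sub_pos.2 hr)]

/-- For `s = (1 - r) / (4r)` one has `r (2 + 3s) - 1 = (5r - 1) / 4`, positive exactly when
`1/5 < r`. -/
theorem exists_one_lt_add_two_mul_div {r : ℝ} (hr1 : 1 / 5 < r) (hr2 : r < 1) :
    ∃ s : ℝ, 0 ≤ s ∧ s < 1 ∧ s * r < 1 ∧ 1 < s + 2 * ((1 - s ^ 2) * r / (1 - s * r)) := by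
  have hr0 : 0 < r := by linarith
  have hsr : (1 - r) / (4 * r) * r = (1 - r) / 4 := by field_simp
  have hs1 : (1 - r) / (4 * r) < 1 := by rw [div_lt_one (by positivity)]; linarith
  refine ⟨(1 - r) / (4 * r), div_nonneg (by linarith) (by positivity), hs1, by rw [hsr]; linarith,
    one_lt_add_two_mul_div hs1 (by rw [hsr]; linarith) ?_⟩
  rw [mul_add, mul_left_comm, mul_comm r (_ / _), hsr]
  linarith

/-- Sharpness of the radius `1/5`: for every `1/5 < r < 1` there are `h, g` analytic on the
unit disk with `|h| ≤ 1` and `|g'| ≤ |h'|`, and a point `z` with `|z| ≤ r`, for which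
`|a₀| + ∑_{k≥1} (|aₖ| + |bₖ|) rᵏ + |h(z) - a₀|² > 1`. -/
theorem stmt7 (r : ℝ) (hr1 : 1/5 < r) (hr2 : r < 1) :
    ∃ (h g : ℂ → ℂ) (a b : ℕ → ℂ) (z : ℂ), b 0 = 0 ∧
      (∀ w ∈ ball (0:ℂ) 1, HasSum (fun k => a k * w ^ k) (h w)) ∧
      (∀ w ∈ ball (0:ℂ) 1, HasSum (fun k => b k * w ^ k) (g w)) ∧
      DifferentiableOn ℂ h (ball (0:ℂ) 1) ∧
      DifferentiableOn ℂ g (ball (0:ℂ) 1) ∧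
      (∀ w ∈ ball (0:ℂ) 1, ‖h w‖ ≤ 1) ∧
      (∀ w ∈ ball (0:ℂ) 1, ‖deriv g w‖ ≤ ‖deriv h w‖) ∧
      ‖z‖ ≤ r ∧
      1 < ‖a 0‖
        + (∑' k : ℕ, (‖a (k+1)‖ + ‖b (k+1)‖) * r ^ (k+1))
        + ‖h z - a 0‖^2 := by
  obtain ⟨s, hs0, hs1, hsr, hbohr⟩ := exists_one_lt_add_two_mul_div hr1 hr2
  have hnorm : ‖(s : ℂ)‖ = s := by rw [Complex.norm_real, Real.norm_of_nonneg hs0]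
  have ha : ‖(s : ℂ)‖ ≤ 1 := hnorm.trans_le hs1.le
  have hr0 : 0 ≤ r := by linarith
  refine ⟨mobius s, fun w => mobius s w - s, mobiusCoeff s, Function.update (mobiusCoeff s) 0 0,
    r, rfl, fun w hw => hasSum_mobiusCoeff ha (mem_ball_zero_iff.1 hw),
    fun w hw => hasSum_update_zero (hasSum_mobiusCoeff ha (mem_ball_zero_iff.1 hw)),
    differentiableOn_mobius ha, (differentiableOn_mobius ha).sub_const _,
    fun w hw => norm_mobius_le_one ha (mem_ball_zero_iff.1 hw).le,
    fun w _ => by rw [deriv_sub_const], by rw [Complex.norm_real, Real.norm_of_nonneg hr0], ?_⟩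
  simp only [Function.update_of_ne (Nat.succ_ne_zero _), ← two_mul, mul_assoc, tsum_mul_left]
  rw [tsum_norm_mobiusCoeff_mul_pow ha hr0 (by rwa [hnorm]), mobiusCoeff.eq_1, hnorm]
  nlinarith [sq_nonneg ‖mobius s r - s‖]
end

section
/- Let h(z) = Σ_{k=0}^∞ a_k z^k and g(z) = Σ_{k=1}^∞ b_k z^k be analytic on the unit disk 𝔻 with |h(z)| < 1 for all z ∈ 𝔻, and suppose there is η ∈ ℂ with |η| = 1 such that g'(z) = η z h'(z) for all z ∈ 𝔻. Then for every r with 0 ≤ r < 1 satisfying 5r + 2(1−r)·log(1−r) ≤ 1, one has |a_0| + Σ_{k=1}^∞ (|a_k| + |b_k|) r^k ≤ 1. (The critical radius r_0 ≈ 0.299824 solves 5x + 2(1−x)log(1−x) = 1.) -/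
/-!
Write `A = |a₀|`. Wiener's inequality gives `|aₙ| ≤ 1 - A²` for `n ≥ 1`: if `zⁿ = w`,
averaging `h` over the rotations of `z` by the `n`-th roots of unity shows that
`G(w) = ∑ a_{nm} wᵐ` maps the disk into itself, and Schwarz–Pick at the origin gives
`|G'(0)| ≤ 1 - |G(0)|²`. Comparing coefficients in `z g'(z) = η z · z h'(z)` gives
`(k+1) b_{k+1} = η k a_k`, so `|a_{k+1}| + |b_{k+1}| ≤ (1 - A²)(1 + k/(k+1))`. Summing, the
series is at most `(1 - A²) T` with `T = 2r/(1-r) + log(1-r)`; the condition on `r` says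
exactly `2T ≤ 1`, and `A + (1 - A²)/2 = 1 - (1 - A)²/2 ≤ 1`.
-/

open Metric Complex Finset ComplexConjugate

local notation "𝔻" => ball (0 : ℂ) 1

section PowerSeries

variable {c d : ℕ → ℂ} {F : ℂ → ℂ}

theorem eball_zero_one_eq : eball (0 : ℂ) 1 = 𝔻 := by
  rw [← ENNReal.coe_one, Metric.eball_coe, NNReal.coe_one]

theorem hasFPowerSeriesOnBall_ofScalars_of_hasSum
    (hF : ∀ z ∈ 𝔻, HasSum (fun k => c k * z ^ k) (F z)) :
    HasFPowerSeriesOnBall F (FormalMultilinearSeries.ofScalars ℂ c) 0 1 where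
  r_le := by
    refine ENNReal.le_of_forall_nnreal_lt fun t ht => ?_
    refine FormalMultilinearSeries.le_radius_of_summable _ ?_
    have ht1 : ((t : ℝ) : ℂ) ∈ 𝔻 := by simpa using ht
    simpa [FormalMultilinearSeries.ofScalars_norm] using (hF _ ht1).summable.norm
  r_pos := one_pos
  hasSum {y} hy := by
    rw [eball_zero_one_eq] at hy
    simpa [FormalMultilinearSeries.ofScalars_apply_eq, mul_comm] using hF y hy

theorem eq_coeff_zero_of_hasSum (hF : ∀ z ∈ 𝔻, HasSum (fun k => c k * z ^ k) (F z)) :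
    F 0 = c 0 := by
  simpa using ((hasFPowerSeriesOnBall_ofScalars_of_hasSum hF).coeff_zero (fun _ => 0)).symm

theorem deriv_zero_eq_coeff_one (hF : ∀ z ∈ 𝔻, HasSum (fun k => c k * z ^ k) (F z)) :
    deriv F 0 = c 1 := by
  simp [(hasFPowerSeriesOnBall_ofScalars_of_hasSum hF).hasFPowerSeriesAt.deriv]

theorem coeff_eq_of_hasSum (hc : ∀ z ∈ 𝔻, HasSum (fun k => c k * z ^ k) (F z))
    (hd : ∀ z ∈ 𝔻, HasSum (fun k => d k * z ^ k) (F z)) : c = d :=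
  FormalMultilinearSeries.ofScalars_series_injective (𝕜 := ℂ) (E := ℂ)
    ((hasFPowerSeriesOnBall_ofScalars_of_hasSum hc).hasFPowerSeriesAt.eq_formalMultilinearSeries
      (hasFPowerSeriesOnBall_ofScalars_of_hasSum hd).hasFPowerSeriesAt)

theorem hasSum_mul_deriv (hF : ∀ z ∈ 𝔻, HasSum (fun k => c k * z ^ k) (F z)) {z : ℂ}
    (hz : z ∈ 𝔻) : HasSum (fun k => k * c k * z ^ k) (z * deriv F z) := by
  have H := ((hasFPowerSeriesOnBall_ofScalars_of_hasSum hF).fderiv.hasSum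
    (y := z) (by rwa [eball_zero_one_eq])).mapL (ContinuousLinearMap.apply ℂ ℂ z)
  rw [← hasSum_nat_add_iff' 1]
  convert H using 1
  · ext n
    rw [ContinuousLinearMap.apply_apply, FormalMultilinearSeries.derivSeries_apply_diag,
      FormalMultilinearSeries.ofScalars_apply_eq]
    simp only [smul_eq_mul, nsmul_eq_mul]
    push_cast
    ring
  · simp [mul_comm]

end PowerSeries

section SchwarzPick

noncomputable def blaschkeFactor (c w : ℂ) : ℂ := (w - c) / (1 - conj c * w)

variable {c : ℂ}

theorem norm_sub_lt_norm_one_sub_conj_mul {w : ℂ} (hc : ‖c‖ < 1) (hw : ‖w‖ < 1) :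
    ‖w - c‖ < ‖1 - conj c * w‖ := by
  have hid : normSq (1 - conj c * w) - normSq (w - c) = (1 - normSq c) * (1 - normSq w) := by
    simp only [normSq_apply, sub_re, sub_im, one_re, one_im, mul_re, mul_im, conj_re, conj_im]
    ring
  have hc2 : normSq c < 1 := by rw [normSq_eq_norm_sq]; nlinarith [norm_nonneg c]
  have hw2 : normSq w < 1 := by rw [normSq_eq_norm_sq]; nlinarith [norm_nonneg w]
  rw [← sq_lt_sq₀ (norm_nonneg _) (norm_nonneg _), ← normSq_eq_norm_sq, ← normSq_eq_norm_sq]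
  nlinarith

theorem one_sub_conj_mul_ne_zero {w : ℂ} (hc : ‖c‖ < 1) (hw : ‖w‖ < 1) :
    1 - conj c * w ≠ 0 :=
  norm_pos_iff.mp ((norm_nonneg _).trans_lt (norm_sub_lt_norm_one_sub_conj_mul hc hw))

theorem mapsTo_blaschkeFactor (hc : ‖c‖ < 1) : Set.MapsTo (blaschkeFactor c) 𝔻 𝔻 := by
  intro w hw
  rw [mem_ball_zero_iff] at hw ⊢
  rw [blaschkeFactor, norm_div, div_lt_one (norm_pos_iff.mpr (one_sub_conj_mul_ne_zero hc hw))]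
  exact norm_sub_lt_norm_one_sub_conj_mul hc hw

theorem hasDerivAt_blaschkeFactor {w : ℂ} (hc : ‖c‖ < 1) (hw : ‖w‖ < 1) :
    HasDerivAt (blaschkeFactor c) ((1 - ‖c‖ ^ 2 : ℂ) / (1 - conj c * w) ^ 2) w := by
  refine (((hasDerivAt_id' w).sub_const c).fun_div
    (((hasDerivAt_id' w).const_mul (conj c)).const_sub 1)
    (one_sub_conj_mul_ne_zero hc hw)).congr_deriv ?_
  rw [← conj_mul']
  ring

theorem differentiableOn_blaschkeFactor (hc : ‖c‖ < 1) :
    DifferentiableOn ℂ (blaschkeFactor c) 𝔻 := fun _ hw =>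
  (hasDerivAt_blaschkeFactor hc (mem_ball_zero_iff.mp hw)).differentiableAt.differentiableWithinAt

theorem hasDerivAt_blaschkeFactor_self (hc : ‖c‖ < 1) :
    HasDerivAt (blaschkeFactor c) (1 - ‖c‖ ^ 2 : ℂ)⁻¹ c := by
  have hden := one_sub_conj_mul_ne_zero hc hc
  rw [conj_mul'] at hden
  refine (hasDerivAt_blaschkeFactor hc hc).congr_deriv ?_
  rw [conj_mul']
  field_simp

theorem blaschkeFactor_self : blaschkeFactor c c = 0 := by simp [blaschkeFactor]

theorem norm_deriv_le_one_sub_sq_norm {f : ℂ → ℂ} (hf : DifferentiableOn ℂ f 𝔻)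
    (hmaps : Set.MapsTo f 𝔻 𝔻) : ‖deriv f 0‖ ≤ 1 - ‖f 0‖ ^ 2 := by
  have h0 : (0 : ℂ) ∈ 𝔻 := mem_ball_self one_pos
  have hc : ‖f 0‖ < 1 := mem_ball_zero_iff.mp (hmaps h0)
  have hψ : HasDerivAt (blaschkeFactor (f 0) ∘ f) ((1 - ‖f 0‖ ^ 2 : ℂ)⁻¹ * deriv f 0) 0 :=
    (hasDerivAt_blaschkeFactor_self hc).comp 0
      (hf.differentiableAt (isOpen_ball.mem_nhds h0)).hasDerivAt
  have hSchwarz : ‖deriv (blaschkeFactor (f 0) ∘ f) 0‖ ≤ 1 := by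
    refine Complex.norm_deriv_le_one_of_mapsTo_ball
      ((differentiableOn_blaschkeFactor hc).comp hf hmaps) ?_ one_pos
    rw [Function.comp_apply, blaschkeFactor_self]
    exact ((mapsTo_blaschkeFactor hc).comp hmaps).mono_right ball_subset_closedBall
  have hpos : 0 < 1 - ‖f 0‖ ^ 2 := by nlinarith [norm_nonneg (f 0)]
  rw [hψ.deriv, norm_mul, norm_inv, ← ofReal_pow, ← ofReal_one, ← ofReal_sub, norm_real,
    Real.norm_of_nonneg hpos.le, inv_mul_le_iff₀ hpos, mul_one] at hSchwarz
  exact hSchwarz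

end SchwarzPick

section Wiener

theorem IsPrimitiveRoot.geom_sum_pow_eq_ite {K : Type*} [Field K] {ζ : K} {n : ℕ}
    (hζ : IsPrimitiveRoot ζ n) (k : ℕ) :
    ∑ j ∈ range n, (ζ ^ k) ^ j = if n ∣ k then (n : K) else 0 := by
  split_ifs with hk
  · simp [(hζ.pow_eq_one_iff_dvd k).mpr hk]
  · rw [geom_sum_eq (mt (hζ.pow_eq_one_iff_dvd k).mp hk), ← pow_mul, mul_comm, pow_mul,
      hζ.pow_eq_one, one_pow, sub_self, zero_div]

theorem hasSum_coeff_mul_pow_of_isPrimitiveRoot {K : Type*} [Field K] [TopologicalSpace K]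
    [IsTopologicalRing K] {c : ℕ → K} {F : K → K} {ζ z : K} {n : ℕ}
    (hζ : IsPrimitiveRoot ζ n) (hn : n ≠ 0)
    (hF : ∀ j, HasSum (fun k => c k * (ζ ^ j * z) ^ k) (F (ζ ^ j * z))) :
    HasSum (fun m => c (n * m) * z ^ (n * m))
      ((n : K)⁻¹ * ∑ j ∈ range n, F (ζ ^ j * z)) := by
  have : NeZero n := ⟨hn⟩
  have hn' : (n : K) ≠ 0 := hζ.neZero'.out
  have hfilter : ∀ k, (n : K)⁻¹ * ∑ j ∈ range n, c k * (ζ ^ j * z) ^ k =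
      if n ∣ k then c k * z ^ k else 0 := by
    intro k
    have hterm : ∀ j, c k * (ζ ^ j * z) ^ k = (ζ ^ k) ^ j * (c k * z ^ k) := fun j => by ring
    simp_rw [hterm, ← sum_mul, hζ.geom_sum_pow_eq_ite]
    split_ifs
    · field_simp
    · simp
  have H := (hasSum_sum (s := range n) fun j _ => hF j).mul_left (n : K)⁻¹
  simp only [hfilter] at H
  rw [← (mul_right_injective₀ hn).hasSum_iff] at H
  · simpa [Function.comp_def] using H
  · rintro k hk
    rw [if_neg (by rintro ⟨m, rfl⟩; exact hk ⟨m, rfl⟩)]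

variable {c : ℕ → ℂ} {F : ℂ → ℂ}

theorem exists_mem_ball_hasSum_coeff_mul
    (hF : ∀ z ∈ 𝔻, HasSum (fun k => c k * z ^ k) (F z)) (hF1 : Set.MapsTo F 𝔻 𝔻)
    {n : ℕ} (hn : n ≠ 0) {w : ℂ} (hw : w ∈ 𝔻) :
    ∃ v ∈ 𝔻, HasSum (fun m => c (n * m) * w ^ m) v := by
  obtain ⟨z, rfl⟩ := IsAlgClosed.exists_pow_nat_eq w (Nat.pos_of_ne_zero hn)
  have hz : ‖z‖ < 1 := by
    rw [mem_ball_zero_iff, norm_pow] at hw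
    exact (pow_lt_one_iff_of_nonneg (norm_nonneg z) hn).mp hw
  obtain ⟨ζ, hζ⟩ : ∃ ζ : ℂ, IsPrimitiveRoot ζ n := ⟨_, Complex.isPrimitiveRoot_exp n hn⟩
  have hmem : ∀ j : ℕ, ζ ^ j * z ∈ 𝔻 := fun j => by
    simpa [norm_mul, norm_pow, hζ.norm'_eq_one hn] using hz
  refine ⟨_, ?_, by simpa only [pow_mul] using
    hasSum_coeff_mul_pow_of_isPrimitiveRoot hζ hn fun j => hF _ (hmem j)⟩
  have hconv := (convex_ball (0 : ℂ) 1).sum_mem (t := range n) (w := fun _ => (n : ℝ)⁻¹)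
    (fun _ _ => by positivity) (by simp [hn]) (fun j _ => hF1 (hmem j))
  simpa [mul_sum, Complex.real_smul] using hconv

theorem norm_coeff_one_le_one_sub_sq (hF : ∀ z ∈ 𝔻, HasSum (fun k => c k * z ^ k) (F z))
    (hF1 : Set.MapsTo F 𝔻 𝔻) : ‖c 1‖ ≤ 1 - ‖c 0‖ ^ 2 := by
  have hd := (hasFPowerSeriesOnBall_ofScalars_of_hasSum hF).differentiableOn
  rw [eball_zero_one_eq] at hd
  simpa [deriv_zero_eq_coeff_one hF, eq_coeff_zero_of_hasSum hF] using
    norm_deriv_le_one_sub_sq_norm hd hF1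

theorem norm_coeff_le_one_sub_sq (hF : ∀ z ∈ 𝔻, HasSum (fun k => c k * z ^ k) (F z))
    (hF1 : Set.MapsTo F 𝔻 𝔻) {n : ℕ} (hn : n ≠ 0) : ‖c n‖ ≤ 1 - ‖c 0‖ ^ 2 := by
  choose! G hG1 hG using fun w (hw : w ∈ 𝔻) =>
    exists_mem_ball_hasSum_coeff_mul hF hF1 hn hw
  simpa using norm_coeff_one_le_one_sub_sq hG hG1

end Wiener

section HarmonicBohr

variable {a b : ℕ → ℂ} {h g : ℂ → ℂ} {η : ℂ}

theorem succ_mul_coeff_eq_of_deriv_eq (hha : ∀ z ∈ 𝔻, HasSum (fun k => a k * z ^ k) (h z))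
    (hga : ∀ z ∈ 𝔻, HasSum (fun k => b k * z ^ k) (g z))
    (hd : ∀ z ∈ 𝔻, deriv g z = η * z * deriv h z) (n : ℕ) :
    (n + 1) * b (n + 1) = η * n * a n := by
  have hshift : ∀ z ∈ 𝔻,
      HasSum (fun k => η * ((k - 1 : ℕ) : ℂ) * a (k - 1) * z ^ k) (z * deriv g z) := by
    intro z hz
    have H : HasSum (fun k => η * k * a k * z ^ (k + 1)) (z * deriv g z) := by
      rw [hd z hz, show z * (η * z * deriv h z) = η * z * (z * deriv h z) by ring]
      exact ((hasSum_mul_deriv hha hz).mul_left (η * z)).congr_fun fun k => by ring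
    exact (hasSum_nat_add_iff' 1).mp (by simpa using H)
  simpa using
    congrFun (coeff_eq_of_hasSum (fun z hz => hasSum_mul_deriv hga hz) hshift) (n + 1)

theorem norm_coeff_succ_le (hha : ∀ z ∈ 𝔻, HasSum (fun k => a k * z ^ k) (h z))
    (hga : ∀ z ∈ 𝔻, HasSum (fun k => b k * z ^ k) (g z)) (hh1 : Set.MapsTo h 𝔻 𝔻)
    (hη : ‖η‖ = 1) (hd : ∀ z ∈ 𝔻, deriv g z = η * z * deriv h z) (n : ℕ) :
    ‖a (n + 1)‖ + ‖b (n + 1)‖ ≤ (1 - ‖a 0‖ ^ 2) * (1 + n / (n + 1)) := by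
  have hb : (n + 1) * ‖b (n + 1)‖ = n * ‖a n‖ := by
    have := congrArg norm (succ_mul_coeff_eq_of_deriv_eq hha hga hd n)
    rwa [norm_mul, norm_mul, norm_mul, hη, ← Nat.cast_succ, norm_natCast, norm_natCast, one_mul,
      Nat.cast_succ] at this
  have hb' : (n + 1) * ‖b (n + 1)‖ ≤ (n + 1) * (n / (n + 1) * (1 - ‖a 0‖ ^ 2)) := by
    rw [hb]
    rcases Nat.eq_zero_or_pos n with rfl | hn
    · simp
    · field_simp
      exact norm_coeff_le_one_sub_sq hha hh1 hn.ne'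
  have := le_of_mul_le_mul_left hb' (by positivity)
  linarith [norm_coeff_le_one_sub_sq hha hh1 n.succ_ne_zero]

end HarmonicBohr

theorem hasSum_one_add_div_mul_pow {r : ℝ} (hr : |r| < 1) :
    HasSum (fun k : ℕ => (1 + k / (k + 1)) * r ^ (k + 1))
      (2 * r / (1 - r) + Real.log (1 - r)) := by
  have hgeom : HasSum (fun k : ℕ => r ^ (k + 1)) (r / (1 - r)) := by
    simpa [pow_succ', div_eq_mul_inv] using (hasSum_geometric_of_abs_lt_one hr).mul_left r
  rw [show 2 * r / (1 - r) + Real.log (1 - r) = 2 * (r / (1 - r)) - -Real.log (1 - r) by ring]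
  refine ((hgeom.mul_left 2).sub (Real.hasSum_pow_div_log_of_abs_lt_one hr)).congr_fun
    fun k => ?_
  field_simp
  ring

theorem stmt10_general (h g : ℂ → ℂ) (a b : ℕ → ℂ)
    (hha : ∀ z ∈ ball (0:ℂ) 1, HasSum (fun k => a k * z ^ k) (h z))
    (hga : ∀ z ∈ ball (0:ℂ) 1, HasSum (fun k => b k * z ^ k) (g z))
    (hb : ∀ z ∈ ball (0:ℂ) 1, ‖h z‖ < 1)
    (η : ℂ) (hη : ‖η‖ = 1)
    (hd : ∀ z ∈ ball (0:ℂ) 1, deriv g z = η * z * deriv h z)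
    (r : ℝ) (hr0 : 0 ≤ r) (hr1 : r < 1)
    (hr : 5 * r + 2 * (1 - r) * Real.log (1 - r) ≤ 1) :
    ‖a 0‖
      + (∑' k : ℕ, (‖a (k+1)‖ + ‖b (k+1)‖) * r ^ (k+1))
      ≤ 1 := by
  have hmaps : Set.MapsTo h 𝔻 𝔻 := fun z hz => mem_ball_zero_iff.mpr (hb z hz)
  have ha0 : ‖a 0‖ < 1 := eq_coeff_zero_of_hasSum hha ▸ hb 0 (mem_ball_self one_pos)
  have hT := (hasSum_one_add_div_mul_pow (abs_lt.mpr ⟨by linarith, hr1⟩)).mul_left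
    (1 - ‖a 0‖ ^ 2)
  have h2T : 2 * (2 * r / (1 - r) + Real.log (1 - r)) ≤ 1 := by
    have hr1' : 0 < 1 - r := by linarith
    rw [show 2 * (2 * r / (1 - r) + Real.log (1 - r)) =
        (4 * r + 2 * (1 - r) * Real.log (1 - r)) / (1 - r) by field_simp; ring, div_le_one hr1']
    linarith
  have hle : ∀ k : ℕ, (‖a (k + 1)‖ + ‖b (k + 1)‖) * r ^ (k + 1) ≤
      (1 - ‖a 0‖ ^ 2) * ((1 + k / (k + 1)) * r ^ (k + 1)) := fun k => by
    rw [← mul_assoc]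
    exact mul_le_mul_of_nonneg_right (norm_coeff_succ_le hha hga hmaps hη hd k) (by positivity)
  have hsum := hasSum_le hle
    (Summable.of_nonneg_of_le (fun k => by positivity) hle hT.summable).hasSum hT
  have hA : 0 ≤ 1 - ‖a 0‖ ^ 2 := by nlinarith [norm_nonneg (a 0)]
  nlinarith [mul_le_mul_of_nonneg_left h2T hA, sq_nonneg (1 - ‖a 0‖)]

/-- Bohr inequality for harmonic mappings with dilatation `g'(z) = η z h'(z)`, `|η| = 1`:
if `|h| < 1` on the unit disk, then `|a₀| + ∑_{k≥1} (|aₖ| + |bₖ|) rᵏ ≤ 1` for every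
`0 ≤ r < 1` satisfying `5r + 2(1-r)·log(1-r) ≤ 1`. -/
theorem stmt10 (h g : ℂ → ℂ) (a b : ℕ → ℂ) (hb0 : b 0 = 0)
    (hha : ∀ z ∈ ball (0:ℂ) 1, HasSum (fun k => a k * z ^ k) (h z))
    (hga : ∀ z ∈ ball (0:ℂ) 1, HasSum (fun k => b k * z ^ k) (g z))
    (hhd : DifferentiableOn ℂ h (ball (0:ℂ) 1))
    (hgd : DifferentiableOn ℂ g (ball (0:ℂ) 1))
    (hb : ∀ z ∈ ball (0:ℂ) 1, ‖h z‖ < 1)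
    (η : ℂ) (hη : ‖η‖ = 1)
    (hd : ∀ z ∈ ball (0:ℂ) 1, deriv g z = η * z * deriv h z)
    (r : ℝ) (hr0 : 0 ≤ r) (hr1 : r < 1)
    (hr : 5 * r + 2 * (1 - r) * Real.log (1 - r) ≤ 1) :
    ‖a 0‖
      + (∑' k : ℕ, (‖a (k+1)‖ + ‖b (k+1)‖) * r ^ (k+1))
      ≤ 1 :=
  stmt10_general h g a b hha hga hb η hη hd r hr0 hr1 hr
end

section
/- Let h(z) = Σ_{k=0}^∞ a_k z^k be analytic on the unit disk 𝔻 with |h(z)| ≤ 1 for all z ∈ 𝔻. Then for every r with 0 < r ≤ 1/2, Σ_{k=1}^∞ |a_k|² r^k ≤ r(1 − |a_0|²)² / (1 − |a_0|² r). -/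
/-!
Put `c = a 0` and `ρ = √r`. By the Schwarz–Pick lemma `|h z - c| ≤ |z| |1 - c̄ h z|` on the
disk, so `|h - c|² ≤ r |1 - c̄ h|²` on the circle `|z| = ρ`. Averaging over that circle and applying
Parseval's identity to the power series `h - c = Σ_{k≥1} a_k z^k` and
`1 - c̄ h = (1 - |c|²) - Σ_{k≥1} c̄ a_k z^k` gives `A ≤ r ((1 - |c|²)² + |c|² A)` for
`A = Σ_{k≥1} |a_k|² r^k`, which rearranges to the claim because `|c|² r < 1`.
-/

open Metric Complex ComplexConjugate Real Set MeasureTheory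

theorem hasSum_circleAverage {ι E : Type*} [Countable ι] [NormedAddCommGroup E]
    [NormedSpace ℝ E] {f : ι → ℂ → E} {F : ℂ → E} {c : ℂ} {R : ℝ} {u : ι → ℝ}
    (hf : ∀ i, ContinuousOn (f i) (sphere c |R|)) (hu : Summable u)
    (hfu : ∀ i, ∀ z ∈ sphere c |R|, ‖f i z‖ ≤ u i)
    (hF : ∀ z ∈ sphere c |R|, HasSum (fun i => f i z) (F z)) :
    HasSum (fun i => circleAverage (f i) c R) (circleAverage F c R) := by
  have hmem := circleMap_mem_sphere' c R
  refine (intervalIntegral.hasSum_integral_of_dominated_convergence (fun i _ => u i)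
    (fun i => ?_) (fun i => ae_of_all _ fun θ _ => hfu i _ (hmem θ)) (ae_of_all _ fun _ _ => hu)
    intervalIntegrable_const (ae_of_all _ fun θ _ => hF _ (hmem θ))).const_smul (2 * π)⁻¹
  exact ((hf i).comp_continuous (continuous_circleMap c R) hmem).aestronglyMeasurable

theorem circleAverage_zpow {R : ℝ} (hR : 0 < R) (n : ℤ) :
    circleAverage (fun z : ℂ => z ^ n) 0 R = if n = 0 then 1 else 0 := by
  split_ifs with hn
  · simp [hn, circleAverage_const]
  rw [circleAverage_eq_circleIntegral hR.ne', circleIntegral.integral_congr hR.le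
    (g := fun z => (z - 0) ^ (n - 1)), circleIntegral.integral_sub_zpow_of_ne (by omega), smul_zero]
  intro z hz
  have hz0 : z ≠ 0 := ne_of_mem_sphere hz hR.ne'
  simp [zpow_sub_one₀ hz0, mul_comm]

theorem circleAverage_conj_pow_mul_pow {R : ℝ} (hR : 0 < R) (j k : ℕ) :
    circleAverage (fun z : ℂ => conj z ^ k * z ^ j) 0 R =
      if j = k then ((R : ℂ) ^ 2) ^ k else 0 := by
  have hsphere : ∀ z ∈ sphere (0 : ℂ) |R|,
      conj z ^ k * z ^ j = ((R : ℂ) ^ 2) ^ k • z ^ ((j : ℤ) - k) := by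
    intro z hz
    rw [abs_of_pos hR] at hz
    have hz0 : z ≠ 0 := ne_of_mem_sphere hz hR.ne'
    have hconj : conj z = (R : ℂ) ^ 2 * z⁻¹ := by
      rw [← mem_sphere_zero_iff_norm.mp hz, ← mul_conj', mul_comm z, mul_assoc,
        mul_inv_cancel₀ hz0, mul_one]
    rw [hconj, zpow_sub₀ hz0, smul_eq_mul]
    simp only [zpow_natCast]
    rw [mul_pow, inv_pow]
    field_simp
  rw [circleAverage_congr_sphere hsphere, circleAverage_fun_smul, circleAverage_zpow hR,
    smul_eq_mul]
  simp [sub_eq_zero]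

theorem summable_norm_mul_pow_of_summable_mul_pow {𝕜 : Type*} [NormedField 𝕜] {a : ℕ → 𝕜}
    {z : 𝕜} (hz : Summable fun k => a k * z ^ k) {ρ : ℝ} (hρ0 : 0 ≤ ρ) (hρ : ρ < ‖z‖) :
    Summable fun k => ‖a k‖ * ρ ^ k := by
  obtain ⟨C, hC⟩ := hz.tendsto_atTop_zero.norm.bddAbove_range
  have hz0 : 0 < ‖z‖ := hρ0.trans_lt hρ
  refine .of_nonneg_of_le (fun k => by positivity) (fun k => ?_)
    ((summable_geometric_of_lt_one (by positivity) ((div_lt_one hz0).mpr hρ)).mul_left C)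
  calc ‖a k‖ * ρ ^ k = ‖a k * z ^ k‖ * (ρ / ‖z‖) ^ k := by
        rw [norm_mul, norm_pow, div_pow]; field_simp
    _ ≤ C * (ρ / ‖z‖) ^ k := by gcongr; exact hC ⟨k, rfl⟩

section PowerSeriesOnCircle

variable {b : ℕ → ℂ} {F : ℂ → ℂ} {R : ℝ}

theorem continuousOn_sphere_of_hasSum_pow (hb : Summable fun k => ‖b k‖ * R ^ k)
    (hF : ∀ z ∈ sphere (0 : ℂ) R, HasSum (fun k => b k * z ^ k) (F z)) :
    ContinuousOn F (sphere 0 R) :=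
  (continuousOn_tsum (f := fun k z => b k * z ^ k) (fun k => by fun_prop) hb
    fun k z hz => by rw [norm_mul, norm_pow, mem_sphere_zero_iff_norm.mp hz]).congr
    fun z hz => (hF z hz).tsum_eq.symm

theorem circleAverage_conj_pow_mul_of_hasSum_pow (hR : 0 < R)
    (hb : Summable fun k => ‖b k‖ * R ^ k)
    (hF : ∀ z ∈ sphere (0 : ℂ) R, HasSum (fun k => b k * z ^ k) (F z)) (k : ℕ) :
    circleAverage (fun z => conj z ^ k * F z) 0 R = ((R : ℂ) ^ 2) ^ k * b k := by
  rw [← abs_of_pos hR] at hb hF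
  have hsum := hasSum_circleAverage (f := fun j z => conj z ^ k * (b j * z ^ j))
    (fun j => by fun_prop) (hb.mul_left (|R| ^ k)) (fun j z hz => by
      rw [norm_mul, norm_mul, norm_pow, norm_pow, norm_conj, mem_sphere_zero_iff_norm.mp hz])
    (fun z hz => (hF z hz).mul_left _)
  have hterm : ∀ j, circleAverage (fun z => conj z ^ k * (b j * z ^ j)) 0 R =
      if j = k then ((R : ℂ) ^ 2) ^ k * b k else 0 := by
    intro j
    simp_rw [mul_left_comm _ (b j), ← smul_eq_mul (b j)]
    rw [circleAverage_fun_smul, circleAverage_conj_pow_mul_pow hR]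
    split_ifs with hjk <;> simp [hjk, mul_comm]
  simp_rw [hterm] at hsum
  exact hsum.unique (hasSum_ite_eq k _)

theorem hasSum_norm_sq_mul_pow_circleAverage (hR : 0 < R)
    (hb : Summable fun k => ‖b k‖ * R ^ k)
    (hF : ∀ z ∈ sphere (0 : ℂ) R, HasSum (fun k => b k * z ^ k) (F z)) :
    HasSum (fun k => ‖b k‖ ^ 2 * (R ^ 2) ^ k) (circleAverage (fun z => ‖F z‖ ^ 2) 0 R) := by
  have hcont := continuousOn_sphere_of_hasSum_pow hb hF
  have hbound : ∀ z ∈ sphere (0 : ℂ) R, ‖F z‖ ≤ ∑' k, ‖b k‖ * R ^ k := fun z hz =>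
    (hF z hz).norm_le_of_bounded hb.hasSum fun k => by
      rw [norm_mul, norm_pow, mem_sphere_zero_iff_norm.mp hz]
  have hsphere : sphere (0 : ℂ) |R| = sphere 0 R := by rw [abs_of_pos hR]
  -- `‖F z‖ ^ 2 = conj (F z) * F z`, and `conj (F z)` is expanded as a power series in `conj z`
  have hsum := hasSum_circleAverage (F := fun z => conj (F z) * F z)
    (f := fun k z => conj (b k) • (conj z ^ k * F z))
    (fun k => hsphere ▸
      (((continuous_conj.pow k).continuousOn.mul hcont).const_smul (conj (b k)) :))
    (hb.mul_right _)
    (fun k z hz => by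
      rw [hsphere] at hz
      rw [smul_eq_mul, norm_mul, norm_mul, norm_pow, norm_conj, norm_conj,
        mem_sphere_zero_iff_norm.mp hz, ← mul_assoc]
      gcongr
      exact hbound z hz)
    (fun z hz => by
      simpa only [Function.comp_apply, map_mul, map_pow, smul_eq_mul, mul_assoc] using
        ((hF z (hsphere ▸ hz)).map (starRingEnd ℂ) continuous_conj).mul_right (F z))
  have hterm : ∀ k,
      conj (b k) • (((R : ℂ) ^ 2) ^ k * b k) = ((‖b k‖ ^ 2 * (R ^ 2) ^ k : ℝ) : ℂ) := by
    intro k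
    rw [smul_eq_mul, mul_left_comm, conj_mul']
    push_cast
    ring
  have havg : circleAverage (fun z => conj (F z) * F z) 0 R =
      ((circleAverage (fun z => ‖F z‖ ^ 2) 0 R : ℝ) : ℂ) := by
    simp_rw [conj_mul', ← ofReal_pow]
    exact ofRealCLM.circleAverage_comp_comm ((hcont.norm.pow 2).circleIntegrable hR.le)
  simp only [circleAverage_fun_smul, circleAverage_conj_pow_mul_of_hasSum_pow hR hb hF, hterm,
    havg] at hsum
  exact hasSum_ofReal.mp hsum

theorem hasSum_norm_sq_mul_pow_circleAverage_of_ball {r : ℝ} (hR : 0 < R) (hRr : R < r)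
    (hF : ∀ z ∈ ball (0 : ℂ) r, HasSum (fun k => b k * z ^ k) (F z)) :
    HasSum (fun k => ‖b k‖ ^ 2 * (R ^ 2) ^ k) (circleAverage (fun z => ‖F z‖ ^ 2) 0 R) := by
  have hmid : (((R + r) / 2 : ℝ) : ℂ) ∈ ball (0 : ℂ) r := by
    rw [mem_ball_zero_iff, norm_real, Real.norm_of_nonneg (by linarith)]; linarith
  refine hasSum_norm_sq_mul_pow_circleAverage hR ?_
    fun z hz => hF z (sphere_subset_ball hRr hz)
  refine summable_norm_mul_pow_of_summable_mul_pow (hF _ hmid).summable hR.le ?_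
  rw [norm_real, Real.norm_of_nonneg (by linarith)]; linarith

end PowerSeriesOnCircle

theorem HasSum.const_add_mul_pow {a : ℕ → ℂ} {z w : ℂ} (h : HasSum (fun k => a k * z ^ k) w)
    (α β : ℂ) : HasSum (fun k => ((if k = 0 then α else 0) + β * a k) * z ^ k) (α + β * w) := by
  convert (hasSum_ite_eq 0 α).add (h.mul_left β) using 2 with k
  rcases k with _ | k <;> simp [mul_assoc]

theorem hasSum_norm_sq_mul_pow_circleAverage_const_add_mul {a : ℕ → ℂ} {h : ℂ → ℂ} {R r : ℝ}
    (hR : 0 < R) (hRr : R < r) (hh : ∀ z ∈ ball (0 : ℂ) r, HasSum (fun k => a k * z ^ k) (h z))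
    (α β : ℂ) :
    HasSum (fun k => ‖β‖ ^ 2 * ‖a (k + 1)‖ ^ 2 * (R ^ 2) ^ (k + 1))
      (circleAverage (fun z => ‖α + β * h z‖ ^ 2) 0 R - ‖α + β * a 0‖ ^ 2) := by
  have := hasSum_norm_sq_mul_pow_circleAverage_of_ball hR hRr fun z hz =>
    (hh z hz).const_add_mul_pow α β
  rw [← hasSum_nat_add_iff' 1] at this
  simpa [mul_pow] using this

theorem normSq_one_sub_conj_mul_sub_normSq_sub (u v : ℂ) :
    normSq (1 - conj v * u) - normSq (u - v) = (1 - normSq u) * (1 - normSq v) := by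
  simp only [normSq_apply, sub_re, sub_im, mul_re, mul_im, one_re, one_im, conj_re, conj_im]
  ring

theorem norm_sub_lt_norm_one_sub_conj_mul_s13 {u v : ℂ} (hu : ‖u‖ < 1) (hv : ‖v‖ < 1) :
    ‖u - v‖ < ‖1 - conj v * u‖ := by
  have hpos : 0 < (1 - normSq u) * (1 - normSq v) := by
    rw [normSq_eq_norm_sq, normSq_eq_norm_sq]
    exact mul_pos (by nlinarith [norm_nonneg u]) (by nlinarith [norm_nonneg v])
  have := normSq_one_sub_conj_mul_sub_normSq_sub u v
  rw [normSq_eq_norm_sq, normSq_eq_norm_sq] at this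
  exact (sq_lt_sq₀ (norm_nonneg _) (norm_nonneg _)).mp (by linarith)

theorem norm_sub_le_mul_norm_one_sub_conj_mul_of_mapsTo {f : ℂ → ℂ}
    (hd : DifferentiableOn ℂ f (ball 0 1)) (hf : MapsTo f (ball 0 1) (ball 0 1)) {z : ℂ}
    (hz : z ∈ ball (0 : ℂ) 1) :
    ‖f z - f 0‖ ≤ ‖z‖ * ‖1 - conj (f 0) * f z‖ := by
  have hlt : ∀ w ∈ ball (0 : ℂ) 1, ‖f w - f 0‖ < ‖1 - conj (f 0) * f w‖ := fun w hw =>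
    norm_sub_lt_norm_one_sub_conj_mul_s13 (mem_ball_zero_iff.mp (hf hw))
      (mem_ball_zero_iff.mp (hf (mem_ball_self one_pos)))
  have hpos : ∀ w ∈ ball (0 : ℂ) 1, 0 < ‖1 - conj (f 0) * f w‖ := fun w hw =>
    (norm_nonneg _).trans_lt (hlt w hw)
  have hschwarz := Complex.norm_le_norm_of_mapsTo_ball
    (f := fun w => (f w - f 0) / (1 - conj (f 0) * f w))
    ((hd.sub_const _).div ((hd.const_mul _).const_sub 1) fun w hw => norm_pos_iff.mp (hpos w hw))
    (fun w hw => by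
      rw [mem_closedBall_zero_iff, norm_div, div_le_one (hpos w hw)]
      exact (hlt w hw).le)
    (by simp) (mem_ball_zero_iff.mp hz)
  rwa [norm_div, div_le_iff₀ (hpos z hz)] at hschwarz

theorem norm_sub_le_mul_norm_one_sub_conj_mul {f : ℂ → ℂ}
    (hd : DifferentiableOn ℂ f (ball 0 1)) (hf : ∀ w ∈ ball (0 : ℂ) 1, ‖f w‖ ≤ 1) {z : ℂ}
    (hz : z ∈ ball (0 : ℂ) 1) :
    ‖f z - f 0‖ ≤ ‖z‖ * ‖1 - conj (f 0) * f z‖ := by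
  -- apply the strict version to `t • f` for `0 < t < 1` and let `t → 1`
  have hscaled : ∀ t ∈ Ioo (0 : ℝ) 1,
      t * ‖f z - f 0‖ ≤ ‖z‖ * ‖1 - (t : ℂ) ^ 2 * (conj (f 0) * f z)‖ := by
    rintro t ⟨ht0, ht1⟩
    have hmaps : MapsTo (fun w => (t : ℂ) * f w) (ball 0 1) (ball 0 1) := fun w hw => by
      rw [mem_ball_zero_iff, norm_mul, norm_real, Real.norm_of_nonneg ht0.le]
      nlinarith [hf w hw, norm_nonneg (f w)]
    have := norm_sub_le_mul_norm_one_sub_conj_mul_of_mapsTo (hd.const_mul _) hmaps hz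
    rw [← mul_sub, norm_mul, norm_real, Real.norm_of_nonneg ht0.le, map_mul, conj_ofReal] at this
    convert this using 4
    ring
  have hclosure : (1 : ℝ) ∈ closure (Ioo (0 : ℝ) 1) := by simp [closure_Ioo zero_ne_one]
  simpa using le_on_closure hscaled (by fun_prop) (by fun_prop) hclosure

theorem circleAverage_norm_sub_sq_le {f : ℂ → ℂ} (hd : DifferentiableOn ℂ f (ball 0 1))
    (hf : ∀ w ∈ ball (0 : ℂ) 1, ‖f w‖ ≤ 1) {R : ℝ} (hR0 : 0 < R) (hR1 : R < 1) :
    circleAverage (fun z => ‖f z - f 0‖ ^ 2) 0 R ≤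
      R ^ 2 * circleAverage (fun z => ‖1 - conj (f 0) * f z‖ ^ 2) 0 R := by
  have hsphere : sphere (0 : ℂ) |R| ⊆ ball 0 1 := sphere_subset_ball (by rwa [abs_of_pos hR0])
  have hcont : ContinuousOn f (sphere 0 |R|) := hd.continuousOn.mono hsphere
  rw [← smul_eq_mul, ← circleAverage_fun_smul]
  refine circleAverage_mono (ContinuousOn.circleIntegrable' (by fun_prop))
    (ContinuousOn.circleIntegrable' (by fun_prop)) fun z hz => ?_
  have := norm_sub_le_mul_norm_one_sub_conj_mul hd hf (hsphere hz)
  rw [mem_sphere_zero_iff_norm.mp hz, abs_of_pos hR0] at this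
  rw [smul_eq_mul, ← mul_pow]
  exact pow_le_pow_left₀ (norm_nonneg _) this 2

/-- If `h(z) = ∑ aₖ zᵏ` is analytic on the unit disk with `|h| ≤ 1`, then for `0 < r ≤ 1/2`,
`∑_{k≥1} |aₖ|² rᵏ ≤ r(1-|a₀|²)²/(1-|a₀|² r)`. -/
theorem stmt13 (h : ℂ → ℂ) (a : ℕ → ℂ)
    (hha : ∀ z ∈ ball (0:ℂ) 1, HasSum (fun k => a k * z ^ k) (h z))
    (hhd : DifferentiableOn ℂ h (ball (0:ℂ) 1))
    (hb : ∀ z ∈ ball (0:ℂ) 1, ‖h z‖ ≤ 1)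
    (r : ℝ) (hr0 : 0 < r) (hr : r ≤ 1/2) :
    (∑' k : ℕ, ‖a (k+1)‖^2 * r ^ (k+1))
      ≤ r * (1 - ‖a 0‖^2)^2 / (1 - ‖a 0‖^2 * r) := by
  have h0 : h 0 = a 0 := by
    simpa using (hha 0 (mem_ball_self one_pos)).unique (hasSum_single 0 fun k hk => by simp [hk])
  have ha0 : ‖a 0‖ ≤ 1 := h0 ▸ hb 0 (mem_ball_self one_pos)
  set ρ := √r
  have hρ0 : 0 < ρ := Real.sqrt_pos.mpr hr0
  have hρ1 : ρ < 1 := (Real.sqrt_lt' one_pos).mpr (by linarith)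
  have hρr : ρ ^ 2 = r := Real.sq_sqrt hr0.le
  have hS := hasSum_norm_sq_mul_pow_circleAverage_const_add_mul hρ0 hρ1 hha (-a 0) 1
  have hT := hasSum_norm_sq_mul_pow_circleAverage_const_add_mul hρ0 hρ1 hha 1 (-conj (a 0))
  have hT0 : ‖1 - conj (a 0) * a 0‖ ^ 2 = (1 - ‖a 0‖ ^ 2) ^ 2 := by
    rw [conj_mul', ← ofReal_pow, ← ofReal_one, ← ofReal_sub, norm_real, Real.norm_eq_abs, sq_abs]
  simp only [hρr, norm_one, one_pow, one_mul, neg_add_cancel, norm_zero, norm_neg, norm_conj,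
    zero_pow two_ne_zero, sub_zero, neg_add_eq_sub, neg_mul, ← sub_eq_add_neg, hT0] at hS hT
  have hTS := (hS.mul_left (‖a 0‖ ^ 2)).unique (by simpa only [mul_assoc] using hT)
  have hschwarz := circleAverage_norm_sub_sq_le hhd hb hρ0 hρ1
  rw [h0, hρr] at hschwarz
  rw [← hS.tsum_eq] at hschwarz hTS
  have ha0sq : ‖a 0‖ ^ 2 ≤ 1 := pow_le_one₀ (norm_nonneg _) ha0
  rw [le_div_iff₀ (by nlinarith)]
  linear_combination hschwarz - r * hTS
end
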